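/- arXiv:2107.05247 — 3 statements merged into one kernel-verified Lean document; each statement's English description precedes it below -/
import Mathlib

section
/- Let n, m, d be positive integers with d ≤ min(n,m), and let Y be a real n×m matrix. For every n×d real matrix A and every m×d real matrix B, there exist an n×d real matrix T_u and an m×d real matrix T_i such that, setting E_u = Y·T_i and E_i = Yᵀ·T_u, one has ‖Y − E_u·E_iᵀ‖_F ≤ ‖Y − A·Bᵀ‖_F. (In other words: whatever factorization error ε a rank-d matrix factorization A·Bᵀ achieves on Y, the inductive parametrization E_u = Y·T_i, E_i = Yᵀ·T_u admits a choice of T_u, T_i achieving error at most ε.) -/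
open Matrix

/-- Frobenius norm of a real matrix: square root of the sum of squares of entries. -/
noncomputable def frobNorm {n m : ℕ} (M : Matrix (Fin n) (Fin m) ℝ) : ℝ :=
  Real.sqrt (∑ i, ∑ j, (M i j) ^ 2)

namespace InmoAux

/-- A column of a matrix, as a vector in Euclidean space. -/
def colE {n m : ℕ} (M : Matrix (Fin n) (Fin m) ℝ) (j : Fin m) :
    EuclideanSpace ℝ (Fin n) := WithLp.toLp 2 (fun i => M i j)

lemma frob_eq_sum_cols {n m : ℕ} (M : Matrix (Fin n) (Fin m) ℝ) :
    frobNorm M = Real.sqrt (∑ j, ‖colE M j‖ ^ 2) := by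
  rw [frobNorm, Finset.sum_comm]
  congr 1
  refine Finset.sum_congr rfl fun j _ => ?_
  rw [EuclideanSpace.norm_eq, Real.sq_sqrt (by positivity)]
  simp [colE, sq_abs]

lemma frob_mono_cols {n m : ℕ} (X Z : Matrix (Fin n) (Fin m) ℝ)
    (h : ∀ j, ‖colE X j‖ ≤ ‖colE Z j‖) : frobNorm X ≤ frobNorm Z := by
  rw [frob_eq_sum_cols, frob_eq_sum_cols]
  apply Real.sqrt_le_sqrt
  refine Finset.sum_le_sum fun j _ => ?_
  exact pow_le_pow_left₀ (norm_nonneg _) (h j) 2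

lemma frob_transpose {n m : ℕ} (M : Matrix (Fin n) (Fin m) ℝ) :
    frobNorm Mᵀ = frobNorm M := by
  rw [frobNorm, frobNorm, Finset.sum_comm]
  rfl

/-- `mulVec` as a linear map between Euclidean spaces. -/
def mulVecE {n m : ℕ} (Y : Matrix (Fin n) (Fin m) ℝ) :
    EuclideanSpace ℝ (Fin m) →ₗ[ℝ] EuclideanSpace ℝ (Fin n) where
  toFun v := WithLp.toLp 2 (Y.mulVec v : Fin n → ℝ)
  map_add' u v := by ext i; simp [Matrix.mulVec_add]
  map_smul' c v := by ext i; simp [Matrix.mulVec_smul]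

/-- Key lemma: replacing `A` by the projection of its columns onto the column space
of `Y` (expressible as `Y * T`) can only decrease Frobenius error. -/
lemma key {n m d : ℕ} (Y : Matrix (Fin n) (Fin m) ℝ)
    (A : Matrix (Fin n) (Fin d) ℝ) (C : Matrix (Fin m) (Fin d) ℝ) :
    ∃ T : Matrix (Fin m) (Fin d) ℝ,
      frobNorm (Y - (Y * T) * Cᵀ) ≤ frobNorm (Y - A * Cᵀ) := by
  classical
  set V : Submodule ℝ (EuclideanSpace ℝ (Fin n)) := LinearMap.range (mulVecE Y) with hV
  let P : EuclideanSpace ℝ (Fin n) →ₗ[ℝ] EuclideanSpace ℝ (Fin n) :=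
    V.subtype ∘ₗ (V.orthogonalProjectionOnto).toLinearMap
  have hPnorm : ∀ v, ‖P v‖ ≤ ‖v‖ := by
    intro v
    have h1 : ‖P v‖ = ‖V.orthogonalProjectionOnto v‖ := rfl
    calc ‖P v‖ = ‖V.orthogonalProjectionOnto v‖ := h1
      _ ≤ ‖V.orthogonalProjectionOnto‖ * ‖v‖ := (V.orthogonalProjectionOnto).le_opNorm v
      _ ≤ 1 * ‖v‖ := by
          have := Submodule.orthogonalProjectionOnto_norm_le V
          gcongr
      _ = ‖v‖ := one_mul ‖v‖
  have hPid : ∀ v ∈ V, P v = v := fun v hv => (Submodule.starProjection_eq_self_iff (K := V)).mpr hv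
  -- columns of Y lie in V
  have hYV : ∀ k : Fin m, colE Y k ∈ V := by
    intro k
    refine ⟨WithLp.toLp 2 (Pi.single k 1 : Fin m → ℝ), ?_⟩
    show WithLp.toLp 2 (Y.mulVec (Pi.single k 1)) = colE Y k
    ext i
    simp [Matrix.mulVec, dotProduct, Pi.single_apply, colE]
  -- choose preimages of projected columns of A
  have hA : ∀ j : Fin d, ∃ t : Fin m → ℝ, (WithLp.toLp 2 (Y.mulVec t) : EuclideanSpace ℝ (Fin n)) = P (colE A j) := by
    intro j
    obtain ⟨t, ht⟩ := (V.orthogonalProjectionOnto (colE A j)).2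
    exact ⟨t.ofLp, ht⟩
  choose t ht using hA
  refine ⟨Matrix.of fun k j => t j k, ?_⟩
  apply frob_mono_cols
  intro k
  have hcol : colE (Y - (Y * Matrix.of fun k j => t j k) * Cᵀ) k
      = P (colE (Y - A * Cᵀ) k) := by
    have hdecomp : colE (Y - A * Cᵀ) k
        = colE Y k - ∑ j, C k j • colE A j := by
      ext i
      simp only [colE, Matrix.sub_apply, Matrix.mul_apply, Matrix.transpose_apply]
      have : (∑ j, C k j • colE A j) i = ∑ j, C k j * A i j := by
        rw [WithLp.ofLp_sum, Finset.sum_apply]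
        simp [colE, mul_comm]
      rw [PiLp.sub_apply]
      simp only [colE] at this
      rw [this]
      ring_nf
      congr 1
      exact Finset.sum_congr rfl fun j _ => mul_comm _ _
    rw [hdecomp, map_sub, map_sum, hPid _ (hYV k)]
    simp only [_root_.map_smul]
    ext i
    simp only [colE, Matrix.sub_apply, Matrix.mul_apply, Matrix.transpose_apply]
    rw [PiLp.sub_apply]
    congr 1
    rw [WithLp.ofLp_sum, Finset.sum_apply]
    refine Finset.sum_congr rfl fun j _ => ?_
    rw [PiLp.smul_apply]
    have h1 : (∑ l, Y i l * (Matrix.of fun k j => t j k) l j) = (Y.mulVec (t j)) i := by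
      simp [Matrix.mulVec, dotProduct]
    simp only [colE] at ht
    rw [h1, ← ht j]
    simp [smul_eq_mul, mul_comm]
  rw [hcol]
  exact hPnorm _

end InmoAux

/-- For any rank-`d` factorization `A * Bᵀ` of `Y`, there exist template
matrices `T_u`, `T_i` such that the inductive parametrization `E_u = Y * T_i`,
`E_i = Yᵀ * T_u` achieves Frobenius error at most that of `A * Bᵀ`. -/
theorem inmo_mf_expressiveness
    (n m d : ℕ) (hn : 0 < n) (hm : 0 < m) (hd : 0 < d) (hdp : d ≤ min n m)
    (Y : Matrix (Fin n) (Fin m) ℝ)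
    (A : Matrix (Fin n) (Fin d) ℝ) (B : Matrix (Fin m) (Fin d) ℝ) :
    ∃ (Tu : Matrix (Fin n) (Fin d) ℝ) (Ti : Matrix (Fin m) (Fin d) ℝ),
      frobNorm (Y - (Y * Ti) * (Yᵀ * Tu)ᵀ) ≤ frobNorm (Y - A * Bᵀ) := by
  obtain ⟨Tu, h1⟩ := InmoAux.key Yᵀ B A
  obtain ⟨Ti, h2⟩ := InmoAux.key Y A (Yᵀ * Tu)
  refine ⟨Tu, Ti, h2.trans ?_⟩
  have e1 : Y - A * (Yᵀ * Tu)ᵀ = (Yᵀ - (Yᵀ * Tu) * Aᵀ)ᵀ := by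
    simp [Matrix.transpose_sub, Matrix.transpose_mul]
  have e2 : Y - A * Bᵀ = (Yᵀ - B * Aᵀ)ᵀ := by
    simp [Matrix.transpose_sub, Matrix.transpose_mul]
  rw [e1, e2, InmoAux.frob_transpose, InmoAux.frob_transpose]
  exact h1
end

section
/- Assume σ_d > 0. Let L_u be an n×n diagonal real matrix and L_i an m×m diagonal real matrix, each with diagonal entries in {0,1}. Then Y − Y·(I_m − L_i)·V^d·(S^d)⁻¹·(U^d)ᵀ·(I_n − L_u)·Y = (Y − U^d·S^d·(V^d)ᵀ) − Y·L_i·V^d·(S^d)⁻¹·(U^d)ᵀ·L_u·Y + U^d·(U^d)ᵀ·L_u·Y + Y·L_i·V^d·(V^d)ᵀ. (This is the exact error decomposition of INMO-MF when only the users/items not flagged by L_u, L_i are used as templates.) -/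
open Matrix

/-- The submatrix consisting of the first `d` columns of a matrix with `p` columns. -/
def firstCols {n p : ℕ} (d : ℕ) (h : d ≤ p) (U : Matrix (Fin n) (Fin p) ℝ) :
    Matrix (Fin n) (Fin d) ℝ :=
  fun i j => U i (Fin.castLE h j)

/-- The truncated diagonal matrix `S^d = diag(σ_1, …, σ_d)`. -/
noncomputable def diagTrunc {p : ℕ} (d : ℕ) (h : d ≤ p) (σ : Fin p → ℝ) :
    Matrix (Fin d) (Fin d) ℝ :=
  Matrix.diagonal (fun j => σ (Fin.castLE h j))

/-- the exact error decomposition of INMO-MF when only the users/items not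
flagged by the 0/1 diagonal matrices `L_u`, `L_i` are used as templates:
`Y − Y (I − L_i) V^d (S^d)⁻¹ (U^d)ᵀ (I − L_u) Y
  = (Y − U^d S^d (V^d)ᵀ) − Y L_i V^d (S^d)⁻¹ (U^d)ᵀ L_u Y + U^d (U^d)ᵀ L_u Y + Y L_i V^d (V^d)ᵀ`. -/
theorem inmo_mf_error_decomposition
    (n m d p : ℕ) (hn : 0 < n) (hm : 0 < m) (hd : 0 < d)
    (hp : p = min n m) (hdp : d ≤ p)
    (Y : Matrix (Fin n) (Fin m) ℝ)
    (U : Matrix (Fin n) (Fin p) ℝ) (V : Matrix (Fin m) (Fin p) ℝ)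
    (σ : Fin p → ℝ)
    (hU : Uᵀ * U = 1) (hV : Vᵀ * V = 1)
    (hσmono : Antitone σ) (hσ0 : ∀ j, 0 ≤ σ j)
    (hY : Y = U * Matrix.diagonal σ * Vᵀ)
    (hσd : 0 < σ ⟨d - 1, by omega⟩)
    (Lu : Matrix (Fin n) (Fin n) ℝ) (Li : Matrix (Fin m) (Fin m) ℝ)
    (lu : Fin n → ℝ) (li : Fin m → ℝ)
    (hLu : Lu = Matrix.diagonal lu) (hLi : Li = Matrix.diagonal li)
    (hlu01 : ∀ j, lu j = 0 ∨ lu j = 1) (hli01 : ∀ j, li j = 0 ∨ li j = 1) :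
    Y - Y * (1 - Li) * firstCols d hdp V * (diagTrunc d hdp σ)⁻¹ * (firstCols d hdp U)ᵀ
          * (1 - Lu) * Y
      = (Y - firstCols d hdp U * diagTrunc d hdp σ * (firstCols d hdp V)ᵀ)
          - Y * Li * firstCols d hdp V * (diagTrunc d hdp σ)⁻¹ * (firstCols d hdp U)ᵀ * Lu * Y
          + firstCols d hdp U * (firstCols d hdp U)ᵀ * Lu * Y
          + Y * Li * firstCols d hdp V * (firstCols d hdp V)ᵀ := by

  set Ud := firstCols d hdp U with hUd
  set Vd := firstCols d hdp V with hVd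
  set Sd := diagTrunc d hdp σ with hSd
  -- invertibility of Sd
  have hσpos : ∀ j : Fin d, 0 < σ (Fin.castLE hdp j) := by
    intro j
    have hle : (⟨d - 1, by omega⟩ : Fin p) ≥ Fin.castLE hdp j := by
      simp [Fin.le_def]; omega
    exact lt_of_lt_of_le hσd (hσmono hle)
  have hSdet : IsUnit Sd.det := by
    rw [hSd, diagTrunc, Matrix.det_diagonal]
    refine isUnit_iff_ne_zero.mpr (Finset.prod_ne_zero_iff.mpr ?_)
    intro j _
    exact ne_of_gt (hσpos j)
  have hSS : Sd * Sd⁻¹ = 1 := Matrix.mul_nonsing_inv _ hSdet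
  have hSS' : Sd⁻¹ * Sd = 1 := Matrix.nonsing_inv_mul _ hSdet
  -- Vᵀ * Vd and Uᵀ * Ud
  have hVtVd : Vᵀ * Vd = Matrix.of (fun a j => if a = Fin.castLE hdp j then (1:ℝ) else 0) := by
    ext a j
    have h := congrFun (congrFun hV a) (Fin.castLE hdp j)
    simpa [Matrix.mul_apply, hVd, firstCols, Matrix.one_apply] using h
  have hUtUd : Uᵀ * Ud = Matrix.of (fun a j => if a = Fin.castLE hdp j then (1:ℝ) else 0) := by
    ext a j
    have h := congrFun (congrFun hU a) (Fin.castLE hdp j)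
    simpa [Matrix.mul_apply, hUd, firstCols, Matrix.one_apply] using h
  -- key products
  have hYV : Y * Vd = Ud * Sd := by
    rw [hY, Matrix.mul_assoc, hVtVd]
    ext i j
    simp [Matrix.mul_apply, Matrix.diagonal_apply, hUd, hSd, firstCols, diagTrunc,
      mul_ite, ite_mul, Finset.sum_ite_eq, Finset.sum_ite_eq']
  have hYtU : Yᵀ * Ud = Vd * Sd := by
    rw [hY, Matrix.transpose_mul, Matrix.transpose_mul, Matrix.transpose_transpose,
      Matrix.diagonal_transpose, Matrix.mul_assoc V _ Ud, Matrix.mul_assoc (Matrix.diagonal σ) Uᵀ Ud, hUtUd, ← Matrix.mul_assoc]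
    ext i j
    simp [Matrix.mul_apply, Matrix.diagonal_apply, hVd, hSd, firstCols, diagTrunc,
      mul_ite, ite_mul, Finset.sum_ite_eq, Finset.sum_ite_eq']
  have hUY : Udᵀ * Y = Sd * Vdᵀ := by
    have := congrArg Matrix.transpose hYtU
    rw [Matrix.transpose_mul, Matrix.transpose_transpose, Matrix.transpose_mul] at this
    rw [this, hSd, diagTrunc, Matrix.diagonal_transpose]
  have key : Y * Vd * Sd⁻¹ = Ud := by rw [hYV, Matrix.mul_assoc, hSS, Matrix.mul_one]
  have e1 : Y * Vd * Sd⁻¹ * Udᵀ * Y = Ud * Sd * Vdᵀ := by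
    rw [key, Matrix.mul_assoc, hUY, ← Matrix.mul_assoc]
  have e2 : Y * Vd * Sd⁻¹ * Udᵀ * Lu * Y = Ud * Udᵀ * Lu * Y := by rw [key]
  have e4 : Y * Li * Vd * Sd⁻¹ * Udᵀ * Y = Y * Li * Vd * Vdᵀ := by
    rw [Matrix.mul_assoc _ Udᵀ Y, hUY, ← Matrix.mul_assoc, Matrix.mul_assoc (Y * Li * Vd) Sd⁻¹ Sd, hSS', Matrix.mul_one]
  -- expand and finish
  have expand : Y * (1 - Li) * Vd * Sd⁻¹ * Udᵀ * (1 - Lu) * Y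
      = Y * Vd * Sd⁻¹ * Udᵀ * Y - Y * Li * Vd * Sd⁻¹ * Udᵀ * Y
        - Y * Vd * Sd⁻¹ * Udᵀ * Lu * Y + Y * Li * Vd * Sd⁻¹ * Udᵀ * Lu * Y := by
    simp only [Matrix.mul_sub, Matrix.sub_mul, Matrix.mul_one, Matrix.one_mul, mul_one, one_mul]
    abel
  rw [expand, e1, e2, e4]
  abel
end

section
/- Let M be a real q×n matrix with columns s_1,…,s_n ∈ ℝ^q, let T ⊆ {1,…,n}, let L be the n×n diagonal matrix with L_{jj} = 1 if j ∈ T and L_{jj} = 0 otherwise, and let Y be an n×m matrix with entries in {0,1}. For each item i ∈ {1,…,m}, let N_i = {j : Y_{ji} = 1}, and for each user j ∈ {1,…,n}, let N_j = {i : Y_{ji} = 1}. Then ‖M·L·Y‖_F² ≤ Σ_{i=1}^m |N_i ∩ T| · Σ_{j ∈ N_i ∩ T} ‖s_j‖₂² ≤ Σ_{j ∈ T} ‖s_j‖₂² · Σ_{i ∈ N_j} |N_i|. -/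
open Matrix

/-- Euclidean norm on `ℝ^q`. -/
noncomputable def eucNorm {q : ℕ} (v : Fin q → ℝ) : ℝ :=
  Real.sqrt (∑ k, (v k) ^ 2)

/-- with `L` the 0/1 diagonal matrix indicating `T`, `Y` a 0/1 matrix,
`N_i = {j : Y_{ji} = 1}` and `N_j = {i : Y_{ji} = 1}`, one has
`‖M·L·Y‖_F² ≤ Σ_i |N_i ∩ T| Σ_{j ∈ N_i ∩ T} ‖s_j‖₂² ≤ Σ_{j ∈ T} ‖s_j‖₂² Σ_{i ∈ N_j} |N_i|`. -/
theorem error_term_upper_bounds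
    (q n m : ℕ)
    (M : Matrix (Fin q) (Fin n) ℝ)
    (T : Finset (Fin n))
    (L : Matrix (Fin n) (Fin n) ℝ)
    (hL : L = Matrix.diagonal (fun j => if j ∈ T then (1 : ℝ) else 0))
    (Y : Matrix (Fin n) (Fin m) ℝ)
    (hY01 : ∀ j i, Y j i = 0 ∨ Y j i = 1) :
    frobNorm (M * L * Y) ^ 2
        ≤ ∑ i : Fin m,
            (((Finset.univ.filter (fun j => Y j i = 1)) ∩ T).card : ℝ)
              * ∑ j ∈ (Finset.univ.filter (fun j => Y j i = 1)) ∩ T,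
                  (eucNorm (fun k => M k j)) ^ 2 ∧
      ∑ i : Fin m,
          (((Finset.univ.filter (fun j => Y j i = 1)) ∩ T).card : ℝ)
            * ∑ j ∈ (Finset.univ.filter (fun j => Y j i = 1)) ∩ T,
                (eucNorm (fun k => M k j)) ^ 2
        ≤ ∑ j ∈ T,
            (eucNorm (fun k => M k j)) ^ 2
              * ∑ i ∈ Finset.univ.filter (fun i => Y j i = 1),
                  ((Finset.univ.filter (fun k => Y k i = 1)).card : ℝ) := by
  subst hL
  set w : Fin n → ℝ := fun j => (eucNorm (fun k => M k j)) ^ 2 with hw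
  set S : Fin m → Finset (Fin n) :=
    fun i => (Finset.univ.filter (fun j => Y j i = 1)) ∩ T with hSdef
  have hwsum : ∀ j, w j = ∑ k, (M k j) ^ 2 := by
    intro j
    simp only [hw, eucNorm]
    rw [Real.sq_sqrt (Finset.sum_nonneg fun k _ => sq_nonneg _)]
  have hwnn : ∀ j, 0 ≤ w j := fun j => sq_nonneg _
  have hentry : ∀ k i,
      (M * Matrix.diagonal (fun j => if j ∈ T then (1 : ℝ) else 0) * Y) k i
        = ∑ j ∈ S i, M k j := by
    intro k i
    rw [Matrix.mul_apply]
    calc ∑ j, (M * Matrix.diagonal (fun j => if j ∈ T then (1 : ℝ) else 0)) k j * Y j i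
        = ∑ j, if j ∈ S i then M k j else 0 := by
          refine Finset.sum_congr rfl fun j _ => ?_
          rw [Matrix.mul_diagonal]
          simp only [hSdef, Finset.mem_inter, Finset.mem_filter, Finset.mem_univ, true_and]
          by_cases hT : j ∈ T
          · rcases hY01 j i with h0 | h1
            · simp [hT, h0]
            · simp [hT, h1]
          · simp [hT]
      _ = ∑ j ∈ S i, M k j := by
          rw [Finset.sum_ite_mem, Finset.univ_inter]
  constructor
  · -- first inequality
    have hfn : frobNorm (M * Matrix.diagonal (fun j => if j ∈ T then (1 : ℝ) else 0) * Y) ^ 2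
        = ∑ k, ∑ i, (∑ j ∈ S i, M k j) ^ 2 := by
      refine (Real.sq_sqrt (Finset.sum_nonneg fun k _ =>
        Finset.sum_nonneg fun i _ => sq_nonneg _)).trans ?_
      exact Finset.sum_congr rfl fun k _ => Finset.sum_congr rfl fun i _ => by rw [hentry]
    rw [hfn]
    calc ∑ k, ∑ i, (∑ j ∈ S i, M k j) ^ 2
        ≤ ∑ k, ∑ i, ((S i).card : ℝ) * ∑ j ∈ S i, (M k j) ^ 2 := by
          refine Finset.sum_le_sum fun k _ => Finset.sum_le_sum fun i _ => ?_
          exact sq_sum_le_card_mul_sum_sq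
      _ = ∑ i, ((S i).card : ℝ) * ∑ j ∈ S i, w j := by
          rw [Finset.sum_comm]
          refine Finset.sum_congr rfl fun i _ => ?_
          rw [← Finset.mul_sum, Finset.sum_comm]
          congr 1
          exact Finset.sum_congr rfl fun j _ => (hwsum j).symm
  · -- second inequality
    have hrewrite : ∀ i, ((S i).card : ℝ) * ∑ j ∈ S i, w j
        = ∑ j ∈ T, if Y j i = 1 then ((S i).card : ℝ) * w j else 0 := by
      intro i
      rw [Finset.mul_sum]
      rw [show S i = T ∩ (Finset.univ.filter (fun j => Y j i = 1)) by
        rw [hSdef]; exact Finset.inter_comm _ _]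
      rw [← Finset.sum_ite_mem]
      refine Finset.sum_congr rfl fun j _ => ?_
      simp [Finset.mem_filter]
    calc ∑ i, ((S i).card : ℝ) * ∑ j ∈ S i, w j
        = ∑ i, ∑ j ∈ T, if Y j i = 1 then ((S i).card : ℝ) * w j else 0 := by
          exact Finset.sum_congr rfl fun i _ => hrewrite i
      _ = ∑ j ∈ T, ∑ i, if Y j i = 1 then ((S i).card : ℝ) * w j else 0 :=
          Finset.sum_comm
      _ ≤ ∑ j ∈ T, w j * ∑ i ∈ Finset.univ.filter (fun i => Y j i = 1),
            ((Finset.univ.filter (fun k => Y k i = 1)).card : ℝ) := by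
          refine Finset.sum_le_sum fun j _ => ?_
          rw [Finset.mul_sum, ← Finset.sum_filter]
          refine Finset.sum_le_sum fun i hi => ?_
          rw [mul_comm]
          refine mul_le_mul_of_nonneg_left ?_ (hwnn j)
          have hsub : S i ⊆ Finset.univ.filter (fun k => Y k i = 1) :=
            Finset.inter_subset_left
          exact Nat.cast_le.mpr (Finset.card_le_card hsub)
end
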